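/- Let P = {P₁, …, Pₙ} be a finite family of pairwise disjoint compact convex sets in the plane, and suppose each unordered pair {Pᵢ, Pⱼ} is separated by at least one closed halfplane from a given finite multiset L of m halfplanes, each halfplane H ∈ L being disjoint from a designated set P_{i(H)} of the family. If m ≤ 9n - 9 and n ≥ 2, then there exists a halfplane H ∈ L containing at least n/18 of the sets P₁, …, Pₙ, while being disjoint from P_{i(H)}. -/

import Mathlib

/-- Each halfplane in the multiset is a closed halfplane `{p | a·p ≤ c}`. -/
def IsClosedHalfplane (H : Set (ℝ × ℝ)) : Prop :=
  ∃ a b c : ℝ, (a, b) ≠ (0, 0) ∧ H = {p : ℝ × ℝ | a * p.1 + b * p.2 ≤ c}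

/-!
Pure double counting. Every pair `{i, j}` is of the form `{idx k, l}` with `P l ⊆ H k`, so the
`n.choose 2` pairs are at most the number of incidences `P l ⊆ H k`, which is at most `m` times
the largest number `M` of sets inside one halfplane. Hence `n (n - 1) / 2 ≤ 9 (n - 1) M`.
-/

open Finset

section Incidences

variable {ι κ : Type*} [Fintype ι] [Fintype κ]

theorem card_choose_two_le_card_incidences [DecidableEq ι] (idx : κ → ι) (r : κ → ι → Prop)
    [DecidableRel r]
    (hcover : ∀ i j, i ≠ j → ∃ k, (idx k = i ∧ r k j) ∨ (idx k = j ∧ r k i)) :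
    (Fintype.card ι).choose 2 ≤ #{p : κ × ι | r p.1 p.2} := by
  have hpairs : powersetCard 2 (univ : Finset ι) ⊆
      image (fun p : κ × ι => {idx p.1, p.2}) {p : κ × ι | r p.1 p.2} := by
    intro s hs
    obtain ⟨i, j, hij, rfl⟩ := card_eq_two.mp (mem_powersetCard.mp hs).2
    obtain ⟨k, ⟨rfl, hk⟩ | ⟨rfl, hk⟩⟩ := hcover i j hij
    · exact mem_image.mpr ⟨(k, j), by simpa using hk, rfl⟩
    · exact mem_image.mpr ⟨(k, i), by simpa using hk, pair_comm _ _⟩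
  calc (Fintype.card ι).choose 2 = #(powersetCard 2 (univ : Finset ι)) := by
        rw [card_powersetCard, card_univ]
    _ ≤ _ := card_le_card hpairs
    _ ≤ _ := card_image_le

theorem card_incidences_eq_sum (r : κ → ι → Prop) [DecidableRel r] :
    #{p : κ × ι | r p.1 p.2} = ∑ k, #{i | r k i} := by
  simp only [card_filter, Fintype.sum_prod_type]

theorem exists_choose_two_le_mul_ncard (idx : κ → ι) (r : κ → ι → Prop)
    (hι : 2 ≤ Fintype.card ι)
    (hcover : ∀ i j, i ≠ j → ∃ k, (idx k = i ∧ r k j) ∨ (idx k = j ∧ r k i)) :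
    ∃ k, (Fintype.card ι).choose 2 ≤ Fintype.card κ * {i | r k i}.ncard := by
  classical
  have hκ : (univ : Finset κ).Nonempty := by
    obtain ⟨i, j, hij⟩ := Fintype.exists_pair_of_one_lt_card hι
    obtain ⟨k, -⟩ := hcover i j hij
    exact ⟨k, mem_univ k⟩
  obtain ⟨k₀, -, hmax⟩ := exists_max_image univ (fun k => #{i | r k i}) hκ
  refine ⟨k₀, ?_⟩
  rw [Set.ncard_eq_toFinset_card', Set.toFinset_ofPred]
  calc (Fintype.card ι).choose 2 ≤ ∑ k, #{i | r k i} :=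
        card_incidences_eq_sum r ▸ card_choose_two_le_card_incidences idx r hcover
    _ ≤ #(univ : Finset κ) • #{i | r k₀ i} :=
        sum_le_card_nsmul _ _ _ fun k _ => hmax k (mem_univ k)
    _ = Fintype.card κ * #{i | r k₀ i} := by rw [card_univ, smul_eq_mul]

end Incidences

theorem le_mul_of_choose_two_le {n m M c : ℕ} (hn : 2 ≤ n) (hm : m ≤ c * (n - 1))
    (h : n.choose 2 ≤ m * M) : n ≤ 2 * c * M := by
  have htwo : n * (n - 1) = n.choose 2 * 2 := by
    simpa [Nat.sub_add_cancel (by omega : 1 ≤ n)] using Nat.add_one_mul_choose_eq (n - 1) 1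
  refine Nat.le_of_mul_le_mul_right (c := n - 1) ?_ (by omega)
  calc n * (n - 1) ≤ m * M * 2 := htwo ▸ Nat.mul_le_mul_right 2 h
    _ ≤ c * (n - 1) * M * 2 := by gcongr
    _ = 2 * c * M * (n - 1) := by ring

theorem stmt_3_general (n m : ℕ) (hn : 2 ≤ n) (hm : m ≤ 9 * n - 9)
    (P : Fin n → Set (ℝ × ℝ))
    (H : Fin m → Set (ℝ × ℝ)) (idx : Fin m → Fin n)
    (hdisj : ∀ k, H k ∩ P (idx k) = ∅)
    (hsep : ∀ i j : Fin n, i < j →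
      ∃ k : Fin m, (idx k = i ∧ P j ⊆ H k) ∨ (idx k = j ∧ P i ⊆ H k)) :
    ∃ k : Fin m, H k ∩ P (idx k) = ∅ ∧
      (n : ℝ) / 18 ≤ ({i : Fin n | P i ⊆ H k}.ncard : ℝ) := by
  have hcover : ∀ i j, i ≠ j → ∃ k, (idx k = i ∧ P j ⊆ H k) ∨ (idx k = j ∧ P i ⊆ H k) := by
    intro i j hij
    rcases hij.lt_or_gt with hlt | hgt
    · exact hsep i j hlt
    · exact (hsep j i hgt).imp fun _ => Or.symm
  obtain ⟨k, hk⟩ := exists_choose_two_le_mul_ncard idx (fun k i => P i ⊆ H k)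
    (by simpa using hn) hcover
  simp only [Fintype.card_fin] at hk
  have h18 : n ≤ 2 * 9 * {i | P i ⊆ H k}.ncard := le_mul_of_choose_two_le hn (by omega) hk
  refine ⟨k, hdisj k, ?_⟩
  rw [div_le_iff₀ (by norm_num)]
  exact_mod_cast (by omega : n ≤ {i | P i ⊆ H k}.ncard * 18)

/-- If a family of `n ≥ 2` pairwise disjoint compact convex plane sets is separated, pair by
pair, by a multiset of `m ≤ 9n - 9` closed halfplanes, each halfplane `H k` being disjoint from
its designated set `P (idx k)`, then some halfplane contains at least `n/18` of the sets while
being disjoint from its designated set. -/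
theorem stmt_3 (n m : ℕ) (hn : 2 ≤ n) (hm : m ≤ 9 * n - 9)
    (P : Fin n → Set (ℝ × ℝ))
    (hcpt : ∀ i, IsCompact (P i)) (hconv : ∀ i, Convex ℝ (P i))
    (hdis : ∀ i j, i ≠ j → P i ∩ P j = ∅)
    (H : Fin m → Set (ℝ × ℝ)) (idx : Fin m → Fin n)
    (hhalf : ∀ k, IsClosedHalfplane (H k))
    (hdisj : ∀ k, H k ∩ P (idx k) = ∅)
    (hsep : ∀ i j : Fin n, i < j →
      ∃ k : Fin m, (idx k = i ∧ P j ⊆ H k) ∨ (idx k = j ∧ P i ⊆ H k)) :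
    ∃ k : Fin m, H k ∩ P (idx k) = ∅ ∧
      (n : ℝ) / 18 ≤ ({i : Fin n | P i ⊆ H k}.ncard : ℝ) :=
  stmt_3_general n m hn hm P H idx hdisj hsep
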